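/- Let p ∈ ℝⁿ with p ≥ 0 solve p = s + Aᵀp + Σᵢ min{rᵢ + Bᵢᵀp, 0}·Eᵢ, and set q = (qˣ, qᵘ) with qˣ = s + Aᵀp, qᵘ = r + Bᵀp. Let {x(k)}_{k=0}^{t} ⊂ ℝⁿ and {u(k)}_{k=0}^{t−1} ⊂ ℝ^m be a noiseless trajectory: x(k+1) = A·x(k) + B·u(k) with x(k) ≥ 0 for all 0 ≤ k ≤ t. Fix λ ∈ (0,1] and define the data matrices Σ(t) = Σ_{k=0}^{t−1} λ^{t−1−k}·[x(k);u(k)]·[x(k);u(k)]ᵀ and Σ̄(t) = Σ_{k=0}^{t−1} λ^{t−1−k}·x(k+1)·[x(k);u(k)]ᵀ. Then for every 0 ≤ k ≤ t−1, (q − [s;r])ᵀ·[x(k);u(k)] = min_{K ∈ 𝒦(E)} ((qˣ)ᵀ + (qᵘ)ᵀK)·x(k+1); and consequently, for any greedy gain K* for qᵘ, the data-driven algebraic equation (q − [s;r])ᵀ·Σ(t) = ((qˣ)ᵀ + (qᵘ)ᵀK*)·Σ̄(t) holds. -/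
import Mathlib


open Matrix Finset

/-- `min{v, 0}`: the minimum of 0 and of all entries of the vector `v`. -/
noncomputable def minZero {α : Type*} [Fintype α] (v : α → ℝ) : ℝ :=
  Finset.univ.fold min 0 v

/-- `‖v‖∞` for a vector: the maximum absolute entry. -/
noncomputable def vecSupNorm {α : Type*} [Fintype α] (v : α → ℝ) : ℝ :=
  Finset.univ.fold max 0 (fun a => |v a|)

/-- `‖M‖∞` for a matrix: the maximum absolute row sum. -/
noncomputable def matInfNorm {α β : Type*} [Fintype α] [Fintype β] (M : Matrix α β ℝ) : ℝ :=
  Finset.univ.fold max 0 (fun a => ∑ b, |M a b|)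

/-- `‖M‖₁` for a matrix: the maximum absolute column sum. -/
noncomputable def matOneNorm {α β : Type*} [Fintype α] [Fintype β] (M : Matrix α β ℝ) : ℝ :=
  matInfNorm Mᵀ

/-- The feasible gain set 𝒦(E): K ≥ 0 entrywise and, for each block i,
either 𝟏ᵀKᵢ = Eᵢᵀ or 𝟏ᵀKᵢ = 0. -/
def feasibleGain {n : ℕ} (m : Fin n → ℕ) (E : Matrix (Fin n) (Fin n) ℝ) :
    Set (Matrix ((i : Fin n) × Fin (m i)) (Fin n) ℝ) :=
  {K | (∀ a j, 0 ≤ K a j) ∧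
    ∀ i : Fin n, (∀ j, ∑ k : Fin (m i), K ⟨i, k⟩ j = E i j) ∨ (∀ k j, K ⟨i, k⟩ j = 0)}

/-- The extended constraint matrix Ē: for each i, mᵢ stacked copies of the row Eᵢᵀ. -/
def extE {n : ℕ} (m : Fin n → ℕ) (E : Matrix (Fin n) (Fin n) ℝ) :
    Matrix ((i : Fin n) × Fin (m i)) (Fin n) ℝ :=
  fun a j => E a.1 j

/-- `K` is a greedy gain for `v`: `K ∈ 𝒦(E)` and `Kᵢᵀ vᵢ = min{vᵢ,0}·Eᵢ` for each block i. -/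
def IsGreedy {n : ℕ} (m : Fin n → ℕ) (E : Matrix (Fin n) (Fin n) ℝ)
    (v : ((i : Fin n) × Fin (m i)) → ℝ)
    (K : Matrix ((i : Fin n) × Fin (m i)) (Fin n) ℝ) : Prop :=
  K ∈ feasibleGain m E ∧
    ∀ i j, (∑ k : Fin (m i), K ⟨i, k⟩ j * v ⟨i, k⟩)
      = minZero (fun k : Fin (m i) => v ⟨i, k⟩) * E i j

/-- The Bellman operator `p ↦ s + Aᵀp + Σᵢ min{rᵢ + Bᵢᵀp, 0}·Eᵢ`. -/
noncomputable def bellman {n : ℕ} (m : Fin n → ℕ) (A : Matrix (Fin n) (Fin n) ℝ)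
    (B : Matrix (Fin n) ((i : Fin n) × Fin (m i)) ℝ)
    (s : Fin n → ℝ) (r : ((i : Fin n) × Fin (m i)) → ℝ)
    (E : Matrix (Fin n) (Fin n) ℝ) (p : Fin n → ℝ) : Fin n → ℝ :=
  fun j => s j + Aᵀ.mulVec p j +
    ∑ i : Fin n, minZero (fun k : Fin (m i) => r ⟨i, k⟩ + Bᵀ.mulVec p ⟨i, k⟩) * E i j



section Aux

lemma minZero_le_zero {α : Type*} [Fintype α] (v : α → ℝ) : minZero v ≤ 0 :=
  (Finset.fold_min_le 0).mpr (Or.inl le_rfl)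

lemma minZero_le {α : Type*} [Fintype α] (v : α → ℝ) (a : α) : minZero v ≤ v a :=
  (Finset.fold_min_le (v a)).mpr (Or.inr ⟨a, Finset.mem_univ a, le_rfl⟩)

lemma le_minZero {α : Type*} [Fintype α] {v : α → ℝ} {c : ℝ} (h0 : c ≤ 0)
    (h : ∀ a, c ≤ v a) : c ≤ minZero v :=
  (Finset.le_fold_min c).mpr ⟨h0, fun a _ => h a⟩

/-- Existence of a greedy gain. -/
lemma exists_greedy {n : ℕ} {m : Fin n → ℕ} (hm : ∀ i, 0 < m i)
    (E : Matrix (Fin n) (Fin n) ℝ) (hE : ∀ i j, 0 ≤ E i j)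
    (v : ((i : Fin n) × Fin (m i)) → ℝ) : ∃ K, IsGreedy m E v K := by
  have hne : ∀ i : Fin n, (Finset.univ : Finset (Fin (m i))).Nonempty := by
    exact fun i => ⟨⟨0, hm i⟩, Finset.mem_univ _⟩
  choose k0 _ hk0 using fun i : Fin n =>
    Finset.exists_min_image Finset.univ (fun k : Fin (m i) => v ⟨i, k⟩) (hne i)
  refine ⟨fun a j => if v ⟨a.1, k0 a.1⟩ ≤ 0 ∧ a.2 = k0 a.1 then E a.1 j else 0, ?_, ?_⟩
  · constructor
    · intro a j; dsimp only; split
      · exact hE a.1 j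
      · exact le_rfl
    · intro i
      by_cases h : v ⟨i, k0 i⟩ ≤ 0
      · left; intro j
        simp only [h, true_and]
        rw [Finset.sum_ite_eq' Finset.univ (k0 i) (fun _ => E i j)]
        simp
      · right; intro k j; simp [h]
  · intro i j
    by_cases h : v ⟨i, k0 i⟩ ≤ 0
    · have hmz : minZero (fun k : Fin (m i) => v ⟨i, k⟩) = v ⟨i, k0 i⟩ := by
        refine le_antisymm (minZero_le _ _) (le_minZero h fun a => hk0 i a (Finset.mem_univ a))
      simp only [h, true_and]
      rw [show (∑ k : Fin (m i), (if k = k0 i then E i j else 0) * v ⟨i, k⟩)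
          = ∑ k : Fin (m i), (if k = k0 i then E i j * v ⟨i, k0 i⟩ else 0) from
        Finset.sum_congr rfl (by intro k _; split <;> simp_all)]
      rw [Finset.sum_ite_eq' Finset.univ (k0 i) (fun _ => E i j * v ⟨i, k0 i⟩)]
      simp [hmz, mul_comm]
    · have hmz : minZero (fun k : Fin (m i) => v ⟨i, k⟩) = 0 := by
        refine le_antisymm (minZero_le_zero _) (le_minZero le_rfl fun a => ?_)
        exact le_of_lt (lt_of_lt_of_le (not_le.mp h) (hk0 i a (Finset.mem_univ a)))
      simp [h, hmz]

end Aux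

section Main

variable {n : ℕ} {m : Fin n → ℕ}

/-- Kᵀ.mulVec w entrywise as a double sum over the sigma type. -/
lemma KTmulVec_apply (K : Matrix ((i : Fin n) × Fin (m i)) (Fin n) ℝ)
    (w : ((i : Fin n) × Fin (m i)) → ℝ) (j : Fin n) :
    Kᵀ.mulVec w j = ∑ i : Fin n, ∑ k : Fin (m i), K ⟨i, k⟩ j * w ⟨i, k⟩ := by
  rw [Matrix.mulVec, dotProduct]
  rw [show (Finset.univ : Finset ((i : Fin n) × Fin (m i)))
      = Finset.univ.sigma (fun _ => Finset.univ) by ext a; simp]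
  rw [Finset.sum_sigma]
  exact Finset.sum_congr rfl fun i _ => Finset.sum_congr rfl fun k _ => by
    rw [Matrix.transpose_apply, mul_comm]

lemma greedy_vec_eq (A : Matrix (Fin n) (Fin n) ℝ)
    (B : Matrix (Fin n) ((i : Fin n) × Fin (m i)) ℝ)
    (s : Fin n → ℝ) (r : ((i : Fin n) × Fin (m i)) → ℝ)
    (E : Matrix (Fin n) (Fin n) ℝ) (p : Fin n → ℝ)
    (hpeq : p = bellman m A B s r E p)
    (K : Matrix ((i : Fin n) × Fin (m i)) (Fin n) ℝ)
    (hK : IsGreedy m E (r + Bᵀ.mulVec p) K) :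
    (s + Aᵀ.mulVec p) + Kᵀ.mulVec (r + Bᵀ.mulVec p) = p := by
  funext j
  have hb := congrFun hpeq j
  rw [bellman] at hb
  simp only [Pi.add_apply]
  rw [KTmulVec_apply, hb]
  ring_nf
  congr 1
  refine Finset.sum_congr rfl fun i _ => ?_
  rw [hK.2 i j]
  congr 1

lemma feasible_vec_le (A : Matrix (Fin n) (Fin n) ℝ)
    (B : Matrix (Fin n) ((i : Fin n) × Fin (m i)) ℝ)
    (s : Fin n → ℝ) (r : ((i : Fin n) × Fin (m i)) → ℝ)
    (E : Matrix (Fin n) (Fin n) ℝ) (hE : ∀ i j, 0 ≤ E i j) (p : Fin n → ℝ)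
    (hpeq : p = bellman m A B s r E p)
    (K : Matrix ((i : Fin n) × Fin (m i)) (Fin n) ℝ)
    (hK : K ∈ feasibleGain m E) (j : Fin n) :
    p j ≤ ((s + Aᵀ.mulVec p) + Kᵀ.mulVec (r + Bᵀ.mulVec p)) j := by
  have hb := congrFun hpeq j
  rw [bellman] at hb
  simp only [Pi.add_apply]
  rw [KTmulVec_apply, hb]
  have key : ∀ i : Fin n,
      minZero (fun k : Fin (m i) => r ⟨i, k⟩ + Bᵀ.mulVec p ⟨i, k⟩) * E i j
      ≤ ∑ k : Fin (m i), K ⟨i, k⟩ j * (r + Bᵀ.mulVec p) ⟨i, k⟩ := by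
    intro i
    rcases hK.2 i with h | h
    · calc minZero (fun k : Fin (m i) => r ⟨i, k⟩ + Bᵀ.mulVec p ⟨i, k⟩) * E i j
          = ∑ k : Fin (m i), K ⟨i, k⟩ j *
            minZero (fun k : Fin (m i) => r ⟨i, k⟩ + Bᵀ.mulVec p ⟨i, k⟩) := by
            rw [← Finset.sum_mul, h j, mul_comm]
        _ ≤ _ := by
            refine Finset.sum_le_sum fun k _ => ?_
            exact mul_le_mul_of_nonneg_left (minZero_le _ k) (hK.1 ⟨i, k⟩ j)
    · have : (∑ k : Fin (m i), K ⟨i, k⟩ j * (r + Bᵀ.mulVec p) ⟨i, k⟩) = 0 := by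
        refine Finset.sum_eq_zero fun k _ => by rw [h k j, zero_mul]
      rw [this]
      exact mul_nonpos_of_nonpos_of_nonneg (minZero_le_zero _) (hE i j)
  linarith [Finset.sum_le_sum fun i (_ : i ∈ Finset.univ) => key i]

lemma dot_key (A : Matrix (Fin n) (Fin n) ℝ)
    (B : Matrix (Fin n) ((i : Fin n) × Fin (m i)) ℝ) (p : Fin n → ℝ)
    (xk : Fin n → ℝ) (uk : ((i : Fin n) × Fin (m i)) → ℝ) :
    Sum.elim (Aᵀ.mulVec p) (Bᵀ.mulVec p) ⬝ᵥ Sum.elim xk uk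
      = p ⬝ᵥ (A.mulVec xk + B.mulVec uk) := by
  have h1 : Sum.elim (Aᵀ.mulVec p) (Bᵀ.mulVec p) ⬝ᵥ Sum.elim xk uk
      = Aᵀ.mulVec p ⬝ᵥ xk + Bᵀ.mulVec p ⬝ᵥ uk := by
    simp [dotProduct, Fintype.sum_sum_type]
  rw [h1, Matrix.mulVec_transpose, Matrix.mulVec_transpose,
    ← Matrix.dotProduct_mulVec, ← Matrix.dotProduct_mulVec, ← dotProduct_add]

end Main

lemma vecMul_sum_smul_vecMulVec {α β : Type*} [Fintype α] [Fintype β]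
    (v : α → ℝ) (t : ℕ) (c : ℕ → ℝ) (a : ℕ → α → ℝ) (b : ℕ → β → ℝ) :
    Matrix.vecMul v (∑ k ∈ Finset.range t, c k • vecMulVec (a k) (b k))
      = ∑ k ∈ Finset.range t, (c k * (v ⬝ᵥ a k)) • b k := by
  funext j
  simp only [Matrix.vecMul, dotProduct, Matrix.sum_apply, Matrix.smul_apply,
    Matrix.vecMulVec_apply, smul_eq_mul, Finset.sum_apply, Pi.smul_apply, Finset.mul_sum]
  rw [Finset.sum_comm]
  refine Finset.sum_congr rfl fun k _ => ?_
  rw [Finset.sum_mul]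
  refine Finset.sum_congr rfl fun i _ => by ring

/-- along a noiseless trajectory, `(q − [s;r])ᵀ[x(k);u(k)]` equals the
minimum over `K ∈ 𝒦(E)` of `((qˣ)ᵀ + (qᵘ)ᵀK)·x(k+1)`, and consequently the data-driven
algebraic equation `(q − [s;r])ᵀΣ(t) = ((qˣ)ᵀ + (qᵘ)ᵀK*)Σ̄(t)` holds for any greedy `K*`. -/
theorem stmt_12 {n : ℕ} {m : Fin n → ℕ} (hn : 0 < n) (hm : ∀ i, 0 < m i)
    (A : Matrix (Fin n) (Fin n) ℝ) (B : Matrix (Fin n) ((i : Fin n) × Fin (m i)) ℝ)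
    (s : Fin n → ℝ) (hs : ∀ j, 0 ≤ s j)
    (r : ((i : Fin n) × Fin (m i)) → ℝ) (hr : ∀ a, 0 ≤ r a)
    (E : Matrix (Fin n) (Fin n) ℝ) (hE : ∀ i j, 0 ≤ E i j)
    (p : Fin n → ℝ) (hp0 : ∀ j, 0 ≤ p j)
    (hpeq : p = bellman m A B s r E p)
    (t : ℕ) (x : ℕ → Fin n → ℝ) (u : ℕ → ((i : Fin n) × Fin (m i)) → ℝ)
    (hdyn : ∀ k < t, x (k + 1) = A.mulVec (x k) + B.mulVec (u k))
    (hx : ∀ k ≤ t, ∀ j, 0 ≤ x k j)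
    (lam : ℝ) (hlam0 : 0 < lam) (hlam1 : lam ≤ 1) :
    (∀ k < t,
      IsLeast {c : ℝ | ∃ K ∈ feasibleGain m E,
          c = ((s + Aᵀ.mulVec p) + Kᵀ.mulVec (r + Bᵀ.mulVec p)) ⬝ᵥ x (k + 1)}
        (Sum.elim (Aᵀ.mulVec p) (Bᵀ.mulVec p) ⬝ᵥ Sum.elim (x k) (u k))) ∧
    ∀ Kstar, IsGreedy m E (r + Bᵀ.mulVec p) Kstar →
      Matrix.vecMul (Sum.elim (Aᵀ.mulVec p) (Bᵀ.mulVec p))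
          (∑ k ∈ Finset.range t, lam ^ (t - 1 - k) •
            vecMulVec (Sum.elim (x k) (u k)) (Sum.elim (x k) (u k)))
        = Matrix.vecMul ((s + Aᵀ.mulVec p) + Kstarᵀ.mulVec (r + Bᵀ.mulVec p))
            (∑ k ∈ Finset.range t, lam ^ (t - 1 - k) •
              vecMulVec (x (k + 1)) (Sum.elim (x k) (u k))) := by
  have hdk : ∀ k < t, Sum.elim (Aᵀ.mulVec p) (Bᵀ.mulVec p) ⬝ᵥ Sum.elim (x k) (u k)
      = p ⬝ᵥ x (k + 1) := by
    intro k hk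
    rw [dot_key, ← hdyn k hk]
  constructor
  · intro k hk
    have hx1 : ∀ j, 0 ≤ x (k + 1) j := hx (k + 1) (by omega)
    constructor
    · obtain ⟨K, hK⟩ := exists_greedy hm E hE (r + Bᵀ.mulVec p)
      refine ⟨K, hK.1, ?_⟩
      rw [greedy_vec_eq A B s r E p hpeq K hK, hdk k hk]
    · rintro c ⟨K, hKf, rfl⟩
      rw [hdk k hk]
      exact Finset.sum_le_sum fun j _ => mul_le_mul_of_nonneg_right
        (feasible_vec_le A B s r E hE p hpeq K hKf j) (hx1 j)
  · intro Kstar hKs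
    rw [greedy_vec_eq A B s r E p hpeq Kstar hKs,
      vecMul_sum_smul_vecMulVec, vecMul_sum_smul_vecMulVec]
    refine Finset.sum_congr rfl fun k hk => ?_
    rw [hdk k (Finset.mem_range.mp hk)]
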